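/- Let A ∈ 𝓑 and suppose there exist a measurable function V : S → [0,∞) and constants c > 0 and k such that ∫_S V(y) P(x,dy) ≤ V(x) − c for all x ∉ A and ∫_S V(y) P(x,dy) ≤ k for all x ∈ A. Then sup_{x ∈ A} 𝔼^x(T_A) ≤ 1 + k/c. -/

import Mathlib

open MeasureTheory ProbabilityTheory
open scoped ENNReal NNReal

noncomputable section

/-- The hitting time `T_A = inf {n ≥ 1 : ω n ∈ A}`, with value `⊤ : ℕ∞` if no such `n` exists. -/
def hitTime {S : Type*} (A : Set S) (ω : ℕ → S) : ℕ∞ :=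
  sInf ((fun k : ℕ => (k : ℕ∞)) '' {k : ℕ | 1 ≤ k ∧ ω k ∈ A})

/-- `IsMarkovPath K μ₀ L` says that `L` is the law on path space `ℕ → E` of the
time-homogeneous Markov chain with transition kernel `K` and initial distribution `μ₀`
(the measure produced by the Ionescu–Tulcea construction), characterized through its
finite-dimensional distributions. -/
def IsMarkovPath {E : Type*} [MeasurableSpace E] (K : Kernel E E) (μ₀ : Measure E)
    (L : Measure (ℕ → E)) : Prop :=
  IsProbabilityMeasure L ∧
    L.map (fun ω => ω 0) = μ₀ ∧
    ∀ n : ℕ,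
      L.map (fun ω => fun i : Fin (n + 2) => ω (i : ℕ)) =
        (L.map (fun ω => fun i : Fin (n + 1) => ω (i : ℕ))).bind
          (fun v => (K (v (Fin.last n))).map (Fin.snoc v))


/-! Write `B n = {T_A > n}` and `r n = 𝔼[V(X_{n+1}); B n]`. On `B (n+1)` the chain sits outside `A`
at time `n+1`, so the Markov property and the drift condition give
`r (n+1) + c ℙ(B (n+1)) ≤ r n`, while `r 0 ≤ PV(x) ≤ k`. Telescoping yields
`c ∑_{n ≥ 1} ℙ(T_A > n) ≤ k`, and `𝔼 T_A = ∑_{n ≥ 0} ℙ(T_A > n) ≤ 1 + k / c`. -/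

lemma ENat.toENNReal_eq_tsum_ite_lt (t : ℕ∞) :
    (t : ℝ≥0∞) = ∑' n : ℕ, if (n : ℕ∞) < t then 1 else 0 := by
  induction t using ENat.recTopCoe with
  | top => simp
  | coe m =>
    rw [tsum_eq_sum (s := Finset.range m) (by simp_all),
      Finset.sum_congr rfl fun n hn => if_pos (by simpa using hn)]
    simp

lemma lintegral_enat_eq_tsum_measure_lt {Ω : Type*} [MeasurableSpace Ω] (μ : Measure Ω)
    {T : Ω → ℕ∞} (hT : ∀ n : ℕ, MeasurableSet {ω | (n : ℕ∞) < T ω}) :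
    ∫⁻ ω, (T ω : ℝ≥0∞) ∂μ = ∑' n : ℕ, μ {ω | (n : ℕ∞) < T ω} := by
  have tsum_indicator (ω : Ω) : (T ω : ℝ≥0∞) = ∑' n : ℕ, {ω | (n : ℕ∞) < T ω}.indicator 1 ω :=
    (ENat.toENNReal_eq_tsum_ite_lt _).trans (by simp [Set.indicator_apply])
  rw [lintegral_congr tsum_indicator,
    lintegral_tsum fun n => (measurable_one.indicator (hT n)).aemeasurable]
  exact tsum_congr fun n => lintegral_indicator_one (hT n)

lemma ENNReal.mul_tsum_le_of_add_mul_le {r p : ℕ → ℝ≥0∞} {c : ℝ≥0∞}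
    (h : ∀ n, r (n + 1) + c * p n ≤ r n) : c * ∑' n, p n ≤ r 0 := by
  have partial_sum : ∀ N, r N + c * ∑ n ∈ Finset.range N, p n ≤ r 0 := by
    intro N
    induction N with
    | zero => simp
    | succ N ih =>
      calc r (N + 1) + c * ∑ n ∈ Finset.range (N + 1), p n
          = r (N + 1) + c * p N + c * ∑ n ∈ Finset.range N, p n := by
            rw [Finset.sum_range_succ, mul_add]; ring
        _ ≤ r 0 := (add_le_add_left (h N) _).trans ih
  rw [ENNReal.tsum_eq_iSup_nat, ENNReal.mul_iSup]
  exact iSup_le fun N => le_add_self.trans (partial_sum N)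

def pathPrefix {E : Type*} (n : ℕ) (ω : ℕ → E) : Fin (n + 1) → E := fun i => ω i

lemma measurable_pathPrefix {E : Type*} [MeasurableSpace E] (n : ℕ) :
    Measurable (pathPrefix (E := E) n) :=
  measurable_pi_lambda _ fun _ => measurable_pi_apply _

def prefixAvoids {E : Type*} (A : Set E) (n : ℕ) : Set (Fin (n + 1) → E) :=
  {v | ∀ i : Fin (n + 1), 1 ≤ (i : ℕ) → v i ∉ A}

lemma setOf_lt_hitTime {S : Type*} (A : Set S) (n : ℕ) :
    {ω | (n : ℕ∞) < hitTime A ω} = pathPrefix n ⁻¹' prefixAvoids A n := by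
  ext ω
  rw [Set.mem_ofPred_eq, hitTime, ← ENat.add_one_le_iff (ENat.natCast_ne_top n), le_sInf_iff]
  simp only [Set.forall_mem_image, Set.mem_ofPred_eq, and_imp, Set.mem_preimage, pathPrefix,
    prefixAvoids]
  norm_cast
  refine ⟨fun h i hi hiA => ?_, fun h k hk hkA => ?_⟩
  · have := h hi hiA; omega
  · by_contra! hkn; exact h ⟨k, by omega⟩ hk hkA

lemma measurableSet_prefixAvoids {E : Type*} [MeasurableSpace E] {A : Set E}
    (hA : MeasurableSet A) (n : ℕ) : MeasurableSet (prefixAvoids A n) := by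
  simp only [prefixAvoids, Set.ofPred_forall]
  exact .iInter fun i => .iInter fun _ => hA.compl.preimage (measurable_pi_apply i)

lemma measurable_snoc {E : Type*} [MeasurableSpace E] {n : ℕ} (v : Fin (n + 1) → E) :
    Measurable fun y : E => (Fin.snoc v y : Fin (n + 2) → E) := by
  refine measurable_pi_lambda _ fun i => ?_
  cases i using Fin.lastCases <;> simp [measurable_id', measurable_const]

namespace IsMarkovPath

variable {E : Type*} [MeasurableSpace E] {K : Kernel E E} {μ₀ : Measure E}
  {L : Measure (ℕ → E)}

lemma map_pathPrefix_succ (hL : IsMarkovPath K μ₀ L) (n : ℕ) :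
    L.map (pathPrefix (n + 1)) = (L.map (pathPrefix n)).bind
      fun v => (K (v (Fin.last n))).map (Fin.snoc (α := fun _ => E) v) :=
  hL.2.2 n

/-- Only `≤` is claimed: it needs no measurability of the kernel inside the `bind`
(`Measure.lintegral_bind_le`). -/
theorem lintegral_mul_succ_le (hL : IsMarkovPath K μ₀ L) (n : ℕ)
    {f : (Fin (n + 1) → E) → ℝ≥0∞} (hf : Measurable f) {g : E → ℝ≥0∞} (hg : Measurable g) :
    ∫⁻ ω, f (pathPrefix n ω) * g (ω (n + 1)) ∂L
      ≤ ∫⁻ ω, f (pathPrefix n ω) * ∫⁻ y, g y ∂K (ω n) ∂L := by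
  have hF : Measurable fun w : Fin (n + 2) → E => f (Fin.init w) * g (w (Fin.last (n + 1))) :=
    (hf.comp (measurable_pi_lambda _ fun i => measurable_pi_apply _)).mul
      (hg.comp (measurable_pi_apply _))
  calc ∫⁻ ω, f (pathPrefix n ω) * g (ω (n + 1)) ∂L
      = ∫⁻ w, f (Fin.init w) * g (w (Fin.last (n + 1))) ∂L.map (pathPrefix (n + 1)) :=
        (lintegral_map hF (measurable_pathPrefix _)).symm
    _ ≤ ∫⁻ v, ∫⁻ w, f (Fin.init w) * g (w (Fin.last (n + 1)))
          ∂(K (v (Fin.last n))).map (Fin.snoc (α := fun _ => E) v) ∂L.map (pathPrefix n) := by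
        rw [hL.map_pathPrefix_succ n]
        exact Measure.lintegral_bind_le _ _ _
    _ = ∫⁻ v, f v * ∫⁻ y, g y ∂K (v (Fin.last n)) ∂L.map (pathPrefix n) := by
        refine lintegral_congr fun v => ?_
        rw [lintegral_map hF (measurable_snoc v)]
        simp only [Fin.init_snoc, Fin.snoc_last]
        exact lintegral_const_mul _ hg
    _ = ∫⁻ ω, f (pathPrefix n ω) * ∫⁻ y, g y ∂K (ω n) ∂L :=
        lintegral_map (hf.mul (hg.lintegral_kernel.comp (measurable_pi_apply _)))
          (measurable_pathPrefix n)

theorem setLIntegral_succ_le (hL : IsMarkovPath K μ₀ L) {n : ℕ} {s : Set (Fin (n + 1) → E)}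
    (hs : MeasurableSet s) {g : E → ℝ≥0∞} (hg : Measurable g) :
    ∫⁻ ω in pathPrefix n ⁻¹' s, g (ω (n + 1)) ∂L
      ≤ ∫⁻ ω in pathPrefix n ⁻¹' s, ∫⁻ y, g y ∂K (ω n) ∂L := by
  have restrict_eq (G : (ℕ → E) → ℝ≥0∞) :
      ∫⁻ ω in pathPrefix n ⁻¹' s, G ω ∂L = ∫⁻ ω, s.indicator 1 (pathPrefix n ω) * G ω ∂L := by
    rw [← lintegral_indicator (hs.preimage (measurable_pathPrefix n))]
    refine lintegral_congr fun ω => ?_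
    by_cases h : pathPrefix n ω ∈ s <;> simp [h]
  rw [restrict_eq, restrict_eq]
  exact hL.lintegral_mul_succ_le n (measurable_one.indicator hs) hg

theorem lintegral_hitTime_le (hL : IsMarkovPath K μ₀ L) {A : Set E} (hA : MeasurableSet A)
    {V : E → ℝ≥0∞} (hV : Measurable V) {c : ℝ≥0} (hc : 0 < c)
    (hdrift : ∀ x ∉ A, ∫⁻ y, V y ∂K x + c ≤ V x) :
    ∫⁻ ω, (hitTime A ω : ℝ≥0∞) ∂L ≤ 1 + (∫⁻ x, ∫⁻ y, V y ∂K x ∂μ₀) / c := by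
  have := hL.1
  set B : ℕ → Set (ℕ → E) := fun n => pathPrefix n ⁻¹' prefixAvoids A n
  set r : ℕ → ℝ≥0∞ := fun n => ∫⁻ ω in B n, V (ω (n + 1)) ∂L
  have r_zero : r 0 ≤ ∫⁻ x, ∫⁻ y, V y ∂K x ∂μ₀ :=
    calc r 0 ≤ ∫⁻ ω in B 0, ∫⁻ y, V y ∂K (ω 0) ∂L :=
          hL.setLIntegral_succ_le (measurableSet_prefixAvoids hA 0) hV
      _ ≤ ∫⁻ ω, ∫⁻ y, V y ∂K (ω 0) ∂L := setLIntegral_le_lintegral _ _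
      _ = ∫⁻ x, ∫⁻ y, V y ∂K x ∂μ₀ := by
          rw [← hL.2.1, lintegral_map hV.lintegral_kernel (measurable_pi_apply 0)]
  have r_succ (n : ℕ) : r (n + 1) + c * L (B (n + 1)) ≤ r n :=
    calc r (n + 1) + c * L (B (n + 1))
        ≤ ∫⁻ ω in B (n + 1), ∫⁻ y, V y ∂K (ω (n + 1)) ∂L + c * L (B (n + 1)) := by
          gcongr
          exact hL.setLIntegral_succ_le (measurableSet_prefixAvoids hA (n + 1)) hV
      _ = ∫⁻ ω in B (n + 1), (∫⁻ y, V y ∂K (ω (n + 1)) + c) ∂L := by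
          rw [lintegral_add_right _ measurable_const, setLIntegral_const]
      _ ≤ ∫⁻ ω in B (n + 1), V (ω (n + 1)) ∂L :=
          setLIntegral_mono (hV.comp (measurable_pi_apply _)) fun ω hω =>
            hdrift _ (hω (Fin.last _) (by simp))
      _ ≤ r n := lintegral_mono_set fun ω hω i hi => hω i.castSucc hi
  have tail : (c : ℝ≥0∞) * ∑' n, L (B (n + 1)) ≤ r 0 := ENNReal.mul_tsum_le_of_add_mul_le r_succ
  rw [lintegral_enat_eq_tsum_measure_lt L fun n => setOf_lt_hitTime A n ▸
      (measurableSet_prefixAvoids hA n).preimage (measurable_pathPrefix n),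
    tsum_eq_zero_add' ENNReal.summable]
  simp only [setOf_lt_hitTime]
  refine add_le_add prob_le_one ?_
  rw [ENNReal.le_div_iff_mul_le (.inl (by exact_mod_cast hc.ne')) (.inl ENNReal.coe_ne_top),
    mul_comm]
  exact tail.trans r_zero

end IsMarkovPath

theorem expected_return_time_bound_of_drift_general
    {S : Type*} [MeasurableSpace S]
    (P : Kernel S S)
    (Pr : S → Measure (ℕ → S))
    (hPr : ∀ x : S, IsMarkovPath P (Measure.dirac x) (Pr x))
    (A : Set S) (hA : MeasurableSet A)
    (V : S → ℝ≥0∞) (hVmeas : Measurable V)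
    (c k : ℝ≥0) (hc : 0 < c)
    (hdrift : ∀ x ∉ A, (∫⁻ y, V y ∂(P x)) + (c : ℝ≥0∞) ≤ V x)
    (hbound : ∀ x ∈ A, ∫⁻ y, V y ∂(P x) ≤ (k : ℝ≥0∞)) :
    ⨆ x ∈ A, ∫⁻ ω, (hitTime A ω : ℝ≥0∞) ∂(Pr x) ≤ 1 + (k : ℝ≥0∞) / (c : ℝ≥0∞) := by
  refine iSup₂_le fun x hx => ?_
  calc ∫⁻ ω, (hitTime A ω : ℝ≥0∞) ∂(Pr x)
      ≤ 1 + (∫⁻ x', ∫⁻ y, V y ∂P x' ∂Measure.dirac x) / c :=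
        (hPr x).lintegral_hitTime_le hA hVmeas hc hdrift
    _ ≤ 1 + (k : ℝ≥0∞) / (c : ℝ≥0∞) := by
        rw [lintegral_dirac' _ hVmeas.lintegral_kernel]
        gcongr
        exact hbound x hx

/-- **Tweedie.** Under a Lyapunov–Foster drift condition `PV ≤ V − c` off `A` and `PV ≤ k`
on `A`, the expected return times to `A` satisfy `sup_{x ∈ A} 𝔼^x (T_A) ≤ 1 + k / c`. -/
theorem expected_return_time_bound_of_drift
    {S : Type*} [MeasurableSpace S] [MeasurableSpace.CountablyGenerated S]
    (P : Kernel S S) [IsMarkovKernel P]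
    (Pr : S → Measure (ℕ → S))
    (hPr : ∀ x : S, IsMarkovPath P (Measure.dirac x) (Pr x))
    (A : Set S) (hA : MeasurableSet A)
    (V : S → ℝ≥0∞) (hVmeas : Measurable V) (hVfin : ∀ x, V x ≠ ⊤)
    (c k : ℝ≥0) (hc : 0 < c)
    (hdrift : ∀ x ∉ A, (∫⁻ y, V y ∂(P x)) + (c : ℝ≥0∞) ≤ V x)
    (hbound : ∀ x ∈ A, ∫⁻ y, V y ∂(P x) ≤ (k : ℝ≥0∞)) :
    ⨆ x ∈ A, ∫⁻ ω, (hitTime A ω : ℝ≥0∞) ∂(Pr x) ≤ 1 + (k : ℝ≥0∞) / (c : ℝ≥0∞) :=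
  expected_return_time_bound_of_drift_general P Pr hPr A hA V hVmeas c k hc hdrift hbound
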